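/- Let S be a weak brace whose additive inverse semigroup (S,+) is commutative, and r the solution r(a,b) = (a∘(a⁻+b), (a⁻+b)⁻∘b). Then r³ = r. -/

import Mathlib

/-- A weak (left) brace: `(S,+)` and `(S,∘)` are inverse semigroups (with designated
inverse maps `neg` and `inv`), satisfying `a∘(b+c) = a∘b - a + a∘c` and `a∘a⁻ = -a + a`. -/
structure WeakBrace (S : Type*) where
  add : S → S → S
  mul : S → S → S
  neg : S → S
  inv : S → S
  add_assoc : ∀ a b c : S, add (add a b) c = add a (add b c)
  mul_assoc : ∀ a b c : S, mul (mul a b) c = mul a (mul b c)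
  add_neg_add : ∀ a : S, add (add a (neg a)) a = a
  neg_add_neg : ∀ a : S, add (add (neg a) a) (neg a) = neg a
  neg_unique : ∀ a x : S, add (add a x) a = a → add (add x a) x = x → x = neg a
  mul_inv_mul : ∀ a : S, mul (mul a (inv a)) a = a
  inv_mul_inv : ∀ a : S, mul (mul (inv a) a) (inv a) = inv a
  inv_unique : ∀ a x : S, mul (mul a x) a = a → mul (mul x a) x = x → x = inv a
  distrib : ∀ a b c : S, mul a (add b c) = add (add (mul a b) (neg a)) (mul a c)
  mul_inv_eq : ∀ a : S, mul a (inv a) = add (neg a) a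

/-! With `s = a∘b`, the solution reads `r(a,b) = (-a + s, (-a + s)⁻ ∘ s)` and preserves the
product of the two coordinates, so on each fibre of `(a,b) ↦ a∘b` it only acts on the first
coordinate, by `f x = -x + s`; in the commutative inverse semigroup `(S,+)` this map satisfies
`f³ = f`. The description of `r` rests on `(a⁻+b)∘(a⁻+b)⁻ = (a⁻∘a)∘(b∘b⁻)`, which holds because
`-c + c = c∘c⁻` and because on idempotents `∘` and `+` agree. -/

structure IsInverseSemigroup {S : Type*} (op : S → S → S) (inv : S → S) : Prop where
  assoc : ∀ a b c, op (op a b) c = op a (op b c)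
  op_inv_op : ∀ a, op (op a (inv a)) a = a
  inv_op_inv : ∀ a, op (op (inv a) a) (inv a) = inv a
  inv_unique : ∀ a x, op (op a x) a = a → op (op x a) x = x → x = inv a

namespace IsInverseSemigroup

variable {S : Type*} {op : S → S → S} {inv : S → S}

local infixl:70 " ⋆ " => op

theorem inv_inv (h : IsInverseSemigroup op inv) (a : S) : inv (inv a) = a :=
  (h.inv_unique _ _ (h.inv_op_inv a) (h.op_inv_op a)).symm

theorem inv_eq_self_of_idem (h : IsInverseSemigroup op inv) {e : S} (he : e ⋆ e = e) :
    inv e = e :=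
  (h.inv_unique e e (by rw [he, he]) (by rw [he, he])).symm

theorem op_inv_idem (h : IsInverseSemigroup op inv) (a : S) :
    a ⋆ inv a ⋆ (a ⋆ inv a) = a ⋆ inv a := by
  rw [← h.assoc, h.op_inv_op]

theorem inv_op_idem (h : IsInverseSemigroup op inv) (a : S) :
    inv a ⋆ a ⋆ (inv a ⋆ a) = inv a ⋆ a := by
  simpa only [h.inv_inv] using h.op_inv_idem (inv a)

theorem op_op_of_idem (h : IsInverseSemigroup op inv) {e : S} (he : e ⋆ e = e) (x : S) :
    e ⋆ (e ⋆ x) = e ⋆ x := by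
  rw [← h.assoc, he]

theorem idem_op_idem (h : IsInverseSemigroup op inv) {e f : S} (he : e ⋆ e = e)
    (hf : f ⋆ f = f) : e ⋆ f ⋆ (e ⋆ f) = e ⋆ f := by
  have sandwich (y z : S) :
      f ⋆ y ⋆ e ⋆ (e ⋆ f) ⋆ (f ⋆ z ⋆ e) = f ⋆ (y ⋆ (e ⋆ f) ⋆ z) ⋆ e := by
    simp only [h.assoc, h.op_op_of_idem he, h.op_op_of_idem hf]
  -- `f ⋆ (e ⋆ f)⁻ ⋆ e` is an inverse of `e ⋆ f`, hence equals `(e ⋆ f)⁻`; this makes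
  -- `(e ⋆ f)⁻` idempotent, and so is its inverse `e ⋆ f`.
  have hx : f ⋆ inv (e ⋆ f) ⋆ e = inv (e ⋆ f) := by
    refine h.inv_unique _ _ ?_ ?_
    · calc e ⋆ f ⋆ (f ⋆ inv (e ⋆ f) ⋆ e) ⋆ (e ⋆ f)
          = e ⋆ f ⋆ inv (e ⋆ f) ⋆ (e ⋆ f) := by
            simp only [h.assoc, h.op_op_of_idem he, h.op_op_of_idem hf]
        _ = e ⋆ f := h.op_inv_op _
    · rw [sandwich, h.inv_op_inv]
  have hxx : inv (e ⋆ f) ⋆ inv (e ⋆ f) = inv (e ⋆ f) := by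
    calc inv (e ⋆ f) ⋆ inv (e ⋆ f) = f ⋆ inv (e ⋆ f) ⋆ e ⋆ (f ⋆ inv (e ⋆ f) ⋆ e) := by
          rw [hx]
      _ = f ⋆ (inv (e ⋆ f) ⋆ (e ⋆ f) ⋆ inv (e ⋆ f)) ⋆ e := by simp only [h.assoc]
      _ = inv (e ⋆ f) := by rw [h.inv_op_inv, hx]
  have hef : e ⋆ f = inv (e ⋆ f) := by
    conv_lhs => rw [← h.inv_inv (e ⋆ f), h.inv_eq_self_of_idem hxx]
  rwa [← hef] at hxx

theorem op_comm_of_idem (h : IsInverseSemigroup op inv) {e f : S} (he : e ⋆ e = e)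
    (hf : f ⋆ f = f) : e ⋆ f = f ⋆ e := by
  have hef := h.idem_op_idem he hf
  have hfe := h.idem_op_idem hf he
  have hinv : f ⋆ e = inv (e ⋆ f) := by
    refine h.inv_unique _ _ ?_ ?_
    · calc e ⋆ f ⋆ (f ⋆ e) ⋆ (e ⋆ f) = e ⋆ f ⋆ (e ⋆ f) := by
            simp only [h.assoc, h.op_op_of_idem he, h.op_op_of_idem hf]
        _ = e ⋆ f := hef
    · calc f ⋆ e ⋆ (e ⋆ f) ⋆ (f ⋆ e) = f ⋆ e ⋆ (f ⋆ e) := by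
            simp only [h.assoc, h.op_op_of_idem he, h.op_op_of_idem hf]
        _ = f ⋆ e := hfe
  rw [hinv, h.inv_eq_self_of_idem hef]

theorem inv_op (h : IsInverseSemigroup op inv) (a b : S) : inv (a ⋆ b) = inv b ⋆ inv a := by
  have hcomm := h.op_comm_of_idem (h.op_inv_idem b) (h.inv_op_idem a)
  refine (h.inv_unique _ _ ?_ ?_).symm
  · calc a ⋆ b ⋆ (inv b ⋆ inv a) ⋆ (a ⋆ b) = a ⋆ (b ⋆ inv b ⋆ (inv a ⋆ a)) ⋆ b := by
          simp only [h.assoc]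
      _ = a ⋆ inv a ⋆ a ⋆ (b ⋆ inv b ⋆ b) := by rw [hcomm]; simp only [h.assoc]
      _ = a ⋆ b := by rw [h.op_inv_op, h.op_inv_op]
  · calc inv b ⋆ inv a ⋆ (a ⋆ b) ⋆ (inv b ⋆ inv a)
          = inv b ⋆ (inv a ⋆ a ⋆ (b ⋆ inv b)) ⋆ inv a := by simp only [h.assoc]
      _ = inv b ⋆ b ⋆ inv b ⋆ (inv a ⋆ a ⋆ inv a) := by rw [← hcomm]; simp only [h.assoc]
      _ = inv b ⋆ inv a := by rw [h.inv_op_inv, h.inv_op_inv]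

theorem inv_op_of_comm (h : IsInverseSemigroup op inv) (hc : ∀ a b, a ⋆ b = b ⋆ a) (a b : S) :
    inv (a ⋆ b) = inv a ⋆ inv b := by
  rw [h.inv_op, hc]

theorem inv_op_inv_op_inv_op (h : IsInverseSemigroup op inv) (hc : ∀ a b, a ⋆ b = b ⋆ a)
    (a s : S) : inv (inv (inv a ⋆ s) ⋆ s) ⋆ s = inv a ⋆ s := by
  rw [h.inv_op_of_comm hc, h.inv_inv, h.assoc, h.assoc, ← h.assoc s, h.op_inv_op]

theorem inv_op_eq_inv_of_op_inv_op_eq (h : IsInverseSemigroup op inv) {c e : S}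
    (hle : c ⋆ inv c ⋆ e = c ⋆ inv c) : inv c ⋆ e = inv c := by
  conv_lhs => rw [← h.inv_op_inv c]
  rw [h.assoc, h.assoc, ← h.assoc c, hle, ← h.assoc, h.inv_op_inv]

end IsInverseSemigroup

namespace WeakBrace

variable {S : Type*} (W : WeakBrace S)

theorem isInverseSemigroup_add : IsInverseSemigroup W.add W.neg :=
  ⟨W.add_assoc, W.add_neg_add, W.neg_add_neg, W.neg_unique⟩

theorem isInverseSemigroup_mul : IsInverseSemigroup W.mul W.inv :=
  ⟨W.mul_assoc, W.mul_inv_mul, W.inv_mul_inv, W.inv_unique⟩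

local infixl:65 " ∔ " => W.add
local infixl:70 " ⊠ " => W.mul

theorem add_self_of_mul_self {e : S} (he : e ⊠ e = e) : e ∔ e = e := by
  have hne : W.neg e ∔ e = e := by
    rw [← W.mul_inv_eq, W.isInverseSemigroup_mul.inv_eq_self_of_idem he, he]
  nth_rewrite 2 [← hne]
  rw [← W.add_assoc, W.add_neg_add]

theorem mul_self_of_add_self {e : S} (he : e ∔ e = e) : e ⊠ e = e := by
  have hinv : e ⊠ W.inv e = e := by
    rw [W.mul_inv_eq, W.isInverseSemigroup_add.inv_eq_self_of_idem he, he]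
  simpa only [hinv] using W.mul_inv_mul e

theorem neg_eq_self_of_mul_self {e : S} (he : e ⊠ e = e) : W.neg e = e :=
  W.isInverseSemigroup_add.inv_eq_self_of_idem (W.add_self_of_mul_self he)

theorem mul_add_left_eq_of_idem (hc : ∀ a b : S, a ∔ b = b ∔ a) {e f : S} (he : e ⊠ e = e)
    (hf : f ⊠ f = f) : e ⊠ f ∔ e = e ⊠ f := by
  have hef := W.add_self_of_mul_self (W.isInverseSemigroup_mul.idem_op_idem he hf)
  have h := W.distrib e f f
  rw [W.add_self_of_mul_self hf, W.neg_eq_self_of_mul_self he, W.add_assoc, hc e, ← W.add_assoc,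
    hef] at h
  exact h.symm

theorem mul_add_of_idem (hc : ∀ a b : S, a ∔ b = b ∔ a) {e f : S} (he : e ⊠ e = e)
    (hf : f ⊠ f = f) : e ⊠ (e ∔ f) = e ⊠ f := by
  rw [W.distrib, he, W.neg_eq_self_of_mul_self he, W.add_self_of_mul_self he, hc,
    W.mul_add_left_eq_of_idem hc he hf]

theorem mul_eq_add_of_idem (hc : ∀ a b : S, a ∔ b = b ∔ a) {e f : S} (he : e ⊠ e = e)
    (hf : f ⊠ f = f) : e ⊠ f = e ∔ f := by
  let _ : Std.Associative W.add := ⟨W.add_assoc⟩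
  let _ : Std.Commutative W.add := ⟨hc⟩
  have hM := W.isInverseSemigroup_mul
  have hga : (e ∔ f) ∔ (e ∔ f) = e ∔ f := by
    calc (e ∔ f) ∔ (e ∔ f) = (e ∔ e) ∔ (f ∔ f) := by ac_rfl
      _ = e ∔ f := by rw [W.add_self_of_mul_self he, W.add_self_of_mul_self hf]
  have hg := W.mul_self_of_add_self hga
  have hfe : f ⊠ e = e ⊠ f := hM.op_comm_of_idem hf he
  have hge : (e ∔ f) ⊠ e = e ⊠ f := by
    rw [hM.op_comm_of_idem hg he, W.mul_add_of_idem hc he hf]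
  have hgf : (e ∔ f) ⊠ f = e ⊠ f := by
    rw [hM.op_comm_of_idem hg hf, hc, W.mul_add_of_idem hc hf he, hfe]
  calc e ⊠ f = e ⊠ f ∔ e ∔ f := by
        rw [W.mul_add_left_eq_of_idem hc he hf, ← hfe, W.mul_add_left_eq_of_idem hc hf he]
    _ = e ⊠ f ∔ (e ∔ f) ∔ e ⊠ f := by
        conv_lhs => rw [← W.add_self_of_mul_self (hM.idem_op_idem he hf)]
        ac_rfl
    _ = (e ∔ f) ⊠ e ∔ W.neg (e ∔ f) ∔ (e ∔ f) ⊠ f := by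
        rw [hge, hgf, W.neg_eq_self_of_mul_self hg]
    _ = e ∔ f := by rw [← W.distrib, hg]

theorem mul_inv_add (a b : S) : a ⊠ (W.inv a ∔ b) = W.neg a ∔ a ⊠ b := by
  rw [W.distrib, W.mul_inv_eq, W.neg_add_neg]

theorem inv_add_mul_inv (hc : ∀ a b : S, a ∔ b = b ∔ a) (a b : S) :
    (W.inv a ∔ b) ⊠ W.inv (W.inv a ∔ b) = W.inv a ⊠ a ⊠ (b ⊠ W.inv b) := by
  let _ : Std.Associative W.add := ⟨W.add_assoc⟩
  let _ : Std.Commutative W.add := ⟨hc⟩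
  have hM := W.isInverseSemigroup_mul
  rw [W.mul_eq_add_of_idem hc (hM.inv_op_idem a) (hM.op_inv_idem b), W.mul_inv_eq,
    W.isInverseSemigroup_add.inv_op_of_comm hc]
  calc W.neg (W.inv a) ∔ W.neg b ∔ (W.inv a ∔ b)
        = W.neg (W.inv a) ∔ W.inv a ∔ (W.neg b ∔ b) := by ac_rfl
    _ = W.inv a ⊠ a ∔ b ⊠ W.inv b := by rw [← W.mul_inv_eq, ← W.mul_inv_eq, hM.inv_inv]

def solution (p : S × S) : S × S :=
  (p.1 ⊠ (W.inv p.1 ∔ p.2), W.inv (W.inv p.1 ∔ p.2) ⊠ p.2)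

theorem solution_fst (p : S × S) : (W.solution p).1 = W.neg p.1 ∔ p.1 ⊠ p.2 :=
  W.mul_inv_add p.1 p.2

theorem solution_snd (hc : ∀ a b : S, a ∔ b = b ∔ a) (p : S × S) :
    (W.solution p).2 = W.inv (W.solution p).1 ⊠ (p.1 ⊠ p.2) := by
  obtain ⟨a, b⟩ := p
  have hM := W.isInverseSemigroup_mul
  have hE := hM.inv_op_idem a
  have hle : (W.inv a ∔ b) ⊠ W.inv (W.inv a ∔ b) ⊠ (W.inv a ⊠ a)
      = (W.inv a ∔ b) ⊠ W.inv (W.inv a ∔ b) := by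
    rw [W.inv_add_mul_inv hc, hM.assoc, hM.op_comm_of_idem (hM.op_inv_idem b) hE, ← hM.assoc, hE]
  calc (W.solution (a, b)).2 = W.inv (W.inv a ∔ b) ⊠ (W.inv a ⊠ a) ⊠ b := by
        rw [hM.inv_op_eq_inv_of_op_inv_op_eq hle]; rfl
    _ = W.inv (W.solution (a, b)).1 ⊠ (a ⊠ b) := by
        simp only [solution, hM.inv_op, hM.assoc]

theorem solution_fst_mul_snd (hc : ∀ a b : S, a ∔ b = b ∔ a) (p : S × S) :
    (W.solution p).1 ⊠ (W.solution p).2 = p.1 ⊠ p.2 := by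
  obtain ⟨a, b⟩ := p
  have hM := W.isInverseSemigroup_mul
  calc (W.solution (a, b)).1 ⊠ (W.solution (a, b)).2
        = a ⊠ ((W.inv a ∔ b) ⊠ W.inv (W.inv a ∔ b)) ⊠ b := by simp only [solution, hM.assoc]
    _ = a ⊠ W.inv a ⊠ a ⊠ (b ⊠ W.inv b ⊠ b) := by
        rw [W.inv_add_mul_inv hc]; simp only [hM.assoc]
    _ = a ⊠ b := by rw [W.mul_inv_mul, W.mul_inv_mul]

theorem solution_comp_solution_comp_solution (hc : ∀ a b : S, a ∔ b = b ∔ a) :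
    W.solution ∘ W.solution ∘ W.solution = W.solution := by
  funext p
  have hm₁ := W.solution_fst_mul_snd hc p
  have hm₂ := (W.solution_fst_mul_snd hc (W.solution p)).trans hm₁
  have hfst : (W.solution (W.solution (W.solution p))).1 = (W.solution p).1 := by
    rw [W.solution_fst (W.solution (W.solution p)), hm₂, W.solution_fst (W.solution p), hm₁,
      W.solution_fst p]
    exact W.isInverseSemigroup_add.inv_op_inv_op_inv_op hc _ _
  refine Prod.ext hfst ?_
  rw [Function.comp_apply, Function.comp_apply, W.solution_snd hc (W.solution (W.solution p)),
    hfst, hm₂, ← W.solution_snd hc p]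

end WeakBrace

theorem weakBrace_comm_add_r_cubic {S : Type*} (W : WeakBrace S)
    (add_comm : ∀ a b : S, W.add a b = W.add b a) :
    let r : S × S → S × S := fun p =>
      (W.mul p.1 (W.add (W.inv p.1) p.2), W.mul (W.inv (W.add (W.inv p.1) p.2)) p.2)
    r ∘ r ∘ r = r :=
  W.solution_comp_solution_comp_solution add_comm
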